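/- Let a, b, c, d, e be nonzero real numbers and let g(a,b,c,d,e) be the Lie algebra structure on ℝ⁷ with nonzero brackets [e₁,e₂] = −a e₄, [e₁,e₇] = −b e₆, [e₂,e₇] = −c e₅, [e₅,e₇] = −d e₃, [e₆,e₇] = −e e₄. Then g(a,b,c,d,e) is isomorphic as a Lie algebra to the nilpotent Lie algebra n₇ on ℝ⁷ with nonzero brackets [e₁,e₂] = −e₄, [e₁,e₃] = −e₅, [e₁,e₄] = −e₆, [e₂,e₃] = −e₆, [e₁,e₅] = −e₇. -/

import Mathlib

noncomputable section

/-- `ℝ⁷` with its standard basis. -/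
abbrev V7 := Fin 7 → ℝ

/-- The Lie bracket of `g(a,b,c,d,e)`: `[e₁,e₂] = −a e₄`, `[e₁,e₇] = −b e₆`,
`[e₂,e₇] = −c e₅`, `[e₅,e₇] = −d e₃`, `[e₆,e₇] = −e e₄`
(0-based indices; all other brackets of basis vectors zero). -/
def brG (a b c d e : ℝ) (X Y : V7) : V7 :=
  ![0, 0, -d * (X 4 * Y 6 - X 6 * Y 4),
    -a * (X 0 * Y 1 - X 1 * Y 0) - e * (X 5 * Y 6 - X 6 * Y 5),
    -c * (X 1 * Y 6 - X 6 * Y 1), -b * (X 0 * Y 6 - X 6 * Y 0), 0]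

/-- The Lie bracket of the nilpotent Lie algebra `n₇`: `[e₁,e₂] = −e₄`, `[e₁,e₃] = −e₅`,
`[e₁,e₄] = −e₆`, `[e₂,e₃] = −e₆`, `[e₁,e₅] = −e₇`. -/
def brN7 (X Y : V7) : V7 :=
  ![0, 0, 0, -(X 0 * Y 1 - X 1 * Y 0), -(X 0 * Y 2 - X 2 * Y 0),
    -(X 0 * Y 3 - X 3 * Y 0) - (X 1 * Y 2 - X 2 * Y 1), -(X 0 * Y 4 - X 4 * Y 0)]

/-! The isomorphism is monomial: it sends `e₇, e₁, e₂, e₆, e₅, e₄, e₃` of `g(a,b,c,d,e)` to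
nonzero multiples of `e₁, …, e₇` of `n₇`. Matching `[e₁,e₂]`, `[e₁,e₃]`, `[e₁,e₄]`, `[e₁,e₅]`
and `[e₂,e₃]` of `n₇` with `[e₇,e₁]`, `[e₇,e₂]`, `[e₇,e₆]`, `[e₇,e₅]` and `[e₁,e₂]` of `g`
determines the scalars one after the other. -/

def LinearEquiv.weightedPerm {K ι : Type*} [CommSemiring K] (σ : Equiv.Perm ι) (s : ι → Kˣ) :
    (ι → K) ≃ₗ[K] (ι → K) :=
  (LinearEquiv.funCongrLeft K K σ).trans
    (LinearEquiv.piCongrRight fun i => LinearEquiv.smulOfUnit (s i))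

@[simp]
theorem LinearEquiv.weightedPerm_apply {K ι : Type*} [CommSemiring K] (σ : Equiv.Perm ι) (s : ι → Kˣ)
    (X : ι → K) (i : ι) : LinearEquiv.weightedPerm σ s X i = s i * X (σ i) :=
  rfl

def gToN7Perm : Equiv.Perm (Fin 7) where
  toFun := ![6, 0, 1, 5, 4, 3, 2]
  invFun := ![1, 2, 6, 5, 4, 3, 0]
  left_inv := by decide
  right_inv := by decide

def gToN7Scale (a b c d e : ℝ) : Fin 7 → ℝ :=
  ![1, 1, a / (b * e), -(1 / b), -(a / (b * e * c)), 1 / (b * e), a / (b * e * c * d)]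

theorem gToN7Scale_ne_zero {a b c d e : ℝ} (ha : a ≠ 0) (hb : b ≠ 0) (hc : c ≠ 0) (hd : d ≠ 0)
    (he : e ≠ 0) (i : Fin 7) : gToN7Scale a b c d e i ≠ 0 := by
  fin_cases i <;> simp [gToN7Scale, *]

theorem gToN7_bracket {a b c d e : ℝ} (hb : b ≠ 0) (hc : c ≠ 0) (hd : d ≠ 0) (he : e ≠ 0)
    (X Y : V7) :
    let h : V7 → V7 := fun Z i => gToN7Scale a b c d e i * Z (gToN7Perm i)
    h (brG a b c d e X Y) = brN7 (h X) (h Y) := by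
  funext i
  fin_cases i <;> simp [gToN7Scale, gToN7Perm, brG, brN7] <;> field_simp <;> ring

/-- For all nonzero `a, b, c, d, e`, the Lie algebra `g(a,b,c,d,e)` is isomorphic to the
nilpotent Lie algebra `n₇` (one of the twelve nilpotent Lie algebras admitting a closed
`G₂`-structure). -/
theorem g_isomorphic_to_n7 (a b c d e : ℝ) (ha : a ≠ 0) (hb : b ≠ 0) (hc : c ≠ 0)
    (hd : d ≠ 0) (he : e ≠ 0) :
    ∃ h : V7 ≃ₗ[ℝ] V7, ∀ X Y : V7, h (brG a b c d e X Y) = brN7 (h X) (h Y) :=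
  ⟨LinearEquiv.weightedPerm gToN7Perm
      fun i => Units.mk0 _ (gToN7Scale_ne_zero ha hb hc hd he i),
    gToN7_bracket hb hc hd he⟩
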